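/- If (r_0, …, r_h) is a δ-sequence with conductor μ = (Σ_{k=1}^h (e_k − 1) r_k) − r_0 + 1, then μ ≥ 2(2^h − 1). In particular h ≤ log₂(μ/2 + 1). -/

import Mathlib

/-- A sequence `r 0, …, r h` of positive integers, together with the chain of gcds
`d 1 = r 0`, `d (k+1) = gcd (d k) (r k)`, is *free* if `d (h+1) = 1` (so the `r k` are
coprime) and `e_k · r_k ∈ ⟨r_0, …, r_{k−1}⟩` for all `1 ≤ k ≤ h`, where
`e k = d k / d (k+1)`. -/
def IsFreeSeq (h : ℕ) (r d : ℕ → ℕ) : Prop :=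
  (∀ k ≤ h, 0 < r k) ∧
  d 1 = r 0 ∧
  (∀ k, 1 ≤ k → k ≤ h → d (k + 1) = Nat.gcd (d k) (r k)) ∧
  d (h + 1) = 1 ∧
  ∀ k, 1 ≤ k → k ≤ h →
    (d k / d (k + 1)) * r k ∈ AddSubmonoid.closure (r '' Set.Iio k)

/-- A free sequence `(r_0, …, r_h)` (with gcd chain `d`) is a *δ-sequence* if moreover
`r_k d_k > r_{k+1} d_{k+1}` for `1 ≤ k ≤ h−1` and
`r_0 > r_1 > d_2 > d_3 > ⋯ > d_{h+1} = 1`. -/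
def IsDeltaSeq (h : ℕ) (r d : ℕ → ℕ) : Prop :=
  IsFreeSeq h r d ∧ 1 ≤ h ∧
  (∀ k, 1 ≤ k → k + 1 ≤ h → r k * d k > r (k + 1) * d (k + 1)) ∧
  r 0 > r 1 ∧ r 1 > d 2 ∧
  ∀ k, 2 ≤ k → k ≤ h → d (k + 1) < d k


/-!
Write `g = d_{k+1} = gcd(d_k, r_k)`, so `d_k = e_k g` and `r_k = c g` with `e_k, c` coprime.
Both exceed `g`: for `d_k` this is the strict decrease of the `d`'s, and for `r_k` it is freeness,
since `r_k = d_{k+1}` would put `d_k = e_k r_k` in the monoid generated by `r_0, …, r_{k-1}`, all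
of which are larger than `d_k`. Hence `e_k, c ≥ 2`, and coprimality forces `c ≥ 3` when `e_k = 2`;
in all cases `(e_k - 1) r_k ≥ (e_k + 1) g = d_k + d_{k+1}`. Summing, the conductor is at least
`2 (d_2 + ⋯ + d_{h+1})`, and since each `d_k` is a proper multiple of `d_{k+1}` and `d_{h+1} = 1`,
this sum is at least `1 + 2 + ⋯ + 2^{h-1}`.
-/

open Finset

theorem Nat.succ_le_sub_one_mul_of_coprime {e c : ℕ} (hec : e.Coprime c) (he : 2 ≤ e)
    (hc : 2 ≤ c) : e + 1 ≤ (e - 1) * c := by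
  rcases he.eq_or_lt with rfl | he
  · have : c % 2 = 1 := Nat.odd_iff.mp (Nat.coprime_two_left.mp hec)
    omega
  · have := Nat.mul_le_mul_left (e - 1) hc
    omega

theorem Nat.add_gcd_le_div_gcd_sub_one_mul {a b : ℕ} (ha : a.gcd b < a) (hb : a.gcd b < b) :
    a + a.gcd b ≤ (a / a.gcd b - 1) * b := by
  obtain ⟨e, c, hec, hae, hbc⟩ := Nat.exists_coprime a b
  have hg : 0 < a.gcd b := Nat.gcd_pos_of_pos_left b (by omega)
  generalize a.gcd b = g at *
  subst hae hbc
  rw [Nat.mul_div_cancel _ hg]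
  have he : 2 ≤ e := by
    by_contra! he
    interval_cases e <;> omega
  have hc : 2 ≤ c := by
    by_contra! hc
    interval_cases c <;> omega
  calc e * g + g = (e + 1) * g := by ring
    _ ≤ (e - 1) * c * g := Nat.mul_le_mul_right g (succ_le_sub_one_mul_of_coprime hec he hc)
    _ = (e - 1) * (c * g) := by ring

theorem Nat.two_mul_le_of_dvd_of_lt {a b : ℕ} (hab : a ∣ b) (hlt : a < b) : 2 * a ≤ b := by
  obtain ⟨c, rfl⟩ := hab
  rcases c with _ | _ | c
  · simp at hlt
  · simp at hlt
  · nlinarith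

theorem sum_Icc_add_succ_sub {R : Type*} [CommRing R] (f : ℕ → R) (n : ℕ) :
    ∑ k ∈ Icc 1 n, (f k + f (k + 1)) - f 1 + f (n + 1) = 2 * ∑ k ∈ Icc 2 (n + 1), f k := by
  induction n with
  | zero => simp
  | succ n ih =>
    rw [sum_Icc_succ_top (by omega), sum_Icc_succ_top (by omega)]
    linear_combination ih

theorem pow_two_mul_le_sum_Icc_add {d : ℕ → ℕ} {m n : ℕ} (hmn : m ≤ n)
    (hd : ∀ k, m ≤ k → k < n → 2 * d (k + 1) ≤ d k) :
    2 ^ (n - m + 1) * d n ≤ ∑ k ∈ Icc m n, d k + d n := by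
  induction n, hmn using Nat.le_induction with
  | base => simp; omega
  | succ n hmn ih =>
    have ih := ih fun k hk hkn => hd k hk (by omega)
    have hstep := hd n hmn (by omega)
    have hpow : 1 ≤ 2 ^ (n - m + 1) := Nat.one_le_two_pow
    rw [sum_Icc_succ_top (by omega), show n + 1 - m + 1 = n - m + 1 + 1 by omega, pow_succ]
    nlinarith

namespace IsFreeSeq

variable {h : ℕ} {r d : ℕ → ℕ} (hf : IsFreeSeq h r d) {k : ℕ}
include hf

theorem d_pos (hk1 : 1 ≤ k) (hkh : k ≤ h + 1) : 0 < d k := by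
  rcases hk1.eq_or_lt with rfl | hk2
  · rw [hf.2.1]
    exact hf.1 0 (Nat.zero_le h)
  · obtain ⟨j, rfl⟩ : ∃ j, k = j + 1 := ⟨k - 1, by omega⟩
    rw [hf.2.2.1 j (by omega) (by omega)]
    exact Nat.gcd_pos_of_pos_right _ (hf.1 j (by omega))

theorem d_succ_dvd_d (hk1 : 1 ≤ k) (hkh : k ≤ h) : d (k + 1) ∣ d k := by
  rw [hf.2.2.1 k hk1 hkh]
  exact Nat.gcd_dvd_left _ _

theorem d_succ_dvd_r (hk1 : 1 ≤ k) (hkh : k ≤ h) : d (k + 1) ∣ r k := by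
  rw [hf.2.2.1 k hk1 hkh]
  exact Nat.gcd_dvd_right _ _

theorem d_le_of_le {j : ℕ} (hj : 1 ≤ j) (hjk : j ≤ k) (hkh : k ≤ h + 1) : d k ≤ d j := by
  induction k, hjk using Nat.le_induction with
  | base => rfl
  | succ k hjk ih =>
    have hk1 : 1 ≤ k := hj.trans hjk
    calc d (k + 1) ≤ d k :=
          Nat.le_of_dvd (hf.d_pos hk1 (by omega)) (hf.d_succ_dvd_d hk1 (by omega))
      _ ≤ d j := ih (by omega)

end IsFreeSeq

theorem AddSubmonoid.eq_zero_or_lt_of_mem_closure {S : Set ℕ} {n x : ℕ} (hS : ∀ s ∈ S, n < s)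
    (hx : x ∈ AddSubmonoid.closure S) : x = 0 ∨ n < x := by
  induction hx using AddSubmonoid.closure_induction with
  | mem s hs => exact Or.inr (hS s hs)
  | zero => exact Or.inl rfl
  | add x y _ _ hx hy => omega

namespace IsDeltaSeq

variable {h : ℕ} {r d : ℕ → ℕ} (hδ : IsDeltaSeq h r d) {k : ℕ}
include hδ

theorem d_succ_lt_d (hk1 : 1 ≤ k) (hkh : k ≤ h) : d (k + 1) < d k := by
  obtain ⟨⟨-, hd1, -⟩, -, -, hr01, hr12, hd⟩ := hδ
  rcases hk1.eq_or_lt with rfl | hk2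
  · show d 2 < d 1
    omega
  · exact hd k hk2 hkh

theorem d_succ_lt_r (hk1 : 1 ≤ k) (hkh : k ≤ h) : d (k + 1) < r k := by
  obtain ⟨hf, -, -, hr01, hr12, -⟩ := hδ
  induction k using Nat.strong_induction_on with
  | _ k ih =>
  rcases hk1.eq_or_lt with rfl | hk2
  · exact hr12
  refine lt_of_le_of_ne (Nat.le_of_dvd (hf.1 k hkh) (hf.d_succ_dvd_r hk1 hkh)) fun hrk => ?_
  have hdk_mem : d k ∈ AddSubmonoid.closure (r '' Set.Iio k) := by
    have := hf.2.2.2.2 k hk1 hkh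
    rwa [← hrk, Nat.div_mul_cancel (hf.d_succ_dvd_d hk1 hkh)] at this
  have hgen : ∀ s ∈ r '' Set.Iio k, d k < s := by
    rintro _ ⟨j, hj : j < k, rfl⟩
    rcases Nat.eq_zero_or_pos j with rfl | hj1
    · calc d k ≤ d 2 := hf.d_le_of_le (by omega) hk2 (by omega)
        _ < r 1 := hr12
        _ < r 0 := hr01
    · exact (hf.d_le_of_le (by omega) hj (by omega)).trans_lt (ih j hj hj1 (by omega))
  have hdk_pos : 0 < d k := hf.d_pos hk1 (by omega)
  rcases AddSubmonoid.eq_zero_or_lt_of_mem_closure hgen hdk_mem with _ | _ <;> omega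

theorem d_add_d_succ_le_conductor_term (hk1 : 1 ≤ k) (hkh : k ≤ h) :
    ((d k : ℤ) + d (k + 1)) ≤ (((d k / d (k + 1) : ℕ) : ℤ) - 1) * (r k : ℤ) := by
  have hgcd := hδ.1.2.2.1 k hk1 hkh
  have hlt_d := hδ.d_succ_lt_d hk1 hkh
  have hlt_r := hδ.d_succ_lt_r hk1 hkh
  rw [hgcd] at hlt_d hlt_r ⊢
  have key := Nat.add_gcd_le_div_gcd_sub_one_mul hlt_d hlt_r
  have he : 1 ≤ d k / (d k).gcd (r k) :=
    Nat.div_pos hlt_d.le (Nat.gcd_pos_of_pos_right _ (hδ.1.1 k hkh))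
  zify [he] at key
  exact key

theorem two_pow_le_sum_d_add_one : 2 ^ h ≤ ∑ k ∈ Icc 2 (h + 1), d k + 1 := by
  have hh := hδ.2.1
  have hhalf : ∀ k, 2 ≤ k → k < h + 1 → 2 * d (k + 1) ≤ d k := fun k _ _ =>
    Nat.two_mul_le_of_dvd_of_lt (hδ.1.d_succ_dvd_d (by omega) (by omega))
      (hδ.d_succ_lt_d (by omega) (by omega))
  have hsum := pow_two_mul_le_sum_Icc_add (by omega) hhalf
  rwa [hδ.1.2.2.2.1, mul_one, show h + 1 - 2 + 1 = h by omega] at hsum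

end IsDeltaSeq

/-- The conductor `μ = (Σ_{k=1}^h (e_k − 1) r_k) − r_0 + 1` of a δ-sequence satisfies
`μ ≥ 2(2^h − 1)`; in particular `h ≤ log₂(μ/2 + 1)`. -/
theorem delta_sequence_conductor_lower_bound (h : ℕ) (r d : ℕ → ℕ)
    (hdelta : IsDeltaSeq h r d) (μ : ℕ)
    (hμ : (μ : ℤ)
      = (∑ k ∈ Finset.Icc 1 h, (((d k / d (k + 1) : ℕ) : ℤ) - 1) * (r k : ℤ))
        - (r 0 : ℤ) + 1) :
    2 * (2 ^ h - 1) ≤ μ ∧ (h : ℝ) ≤ Real.logb 2 ((μ : ℝ) / 2 + 1) := by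
  have hterms : ∑ k ∈ Icc 1 h, ((d k : ℤ) + d (k + 1))
      ≤ ∑ k ∈ Icc 1 h, (((d k / d (k + 1) : ℕ) : ℤ) - 1) * (r k : ℤ) :=
    sum_le_sum fun k hk => hdelta.d_add_d_succ_le_conductor_term (mem_Icc.1 hk).1 (mem_Icc.1 hk).2
  have htelescope := sum_Icc_add_succ_sub (fun k => (d k : ℤ)) h
  have hgeom : (2 ^ h : ℤ) ≤ ∑ k ∈ Icc 2 (h + 1), (d k : ℤ) + 1 := by
    exact_mod_cast hdelta.two_pow_le_sum_d_add_one
  have hd1 : (d 1 : ℤ) = r 0 := by exact_mod_cast hdelta.1.2.1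
  have hdh : (d (h + 1) : ℤ) = 1 := by exact_mod_cast hdelta.1.2.2.2.1
  have hμ' : 2 * (2 ^ h - 1 : ℤ) ≤ μ := by linarith
  refine ⟨by zify [Nat.one_le_two_pow]; exact hμ', ?_⟩
  rw [Real.le_logb_iff_rpow_le one_lt_two (by positivity), Real.rpow_natCast]
  have : ((2 * (2 ^ h - 1) : ℤ) : ℝ) ≤ μ := by exact_mod_cast hμ'
  push_cast at this
  linarith
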